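/- Let g be a differential graded Lie algebra concentrated in degrees 0 and -1. Define the derived bracket on g^{-1} by [x,y]_{-1} := [dx, y]. Then the derived bracket satisfies the Jacobi identity and antisymmetry, making g^{-1} into a Lie algebra (in the ordinary ungraded sense). -/
import Mathlib


/-- A differential graded Lie algebra over `k` concentrated in degrees `≤ 0`,
presented by an internal direct sum decomposition of a carrier module `L`:
`𝒜 i` is the component of degree `-i`.  The bracket `brk` and the degree `+1`
differential `d` satisfy the graded (Koszul-sign) antisymmetry, Jacobi and
Leibniz rules, and `d ∘ d = 0`. -/
structure GradedDGLA (k : Type*) (L : Type*) [Field k] [CharZero k]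
    [AddCommGroup L] [Module k L] where
  𝒜 : ℕ → Submodule k L
  isInternal : DirectSum.IsInternal 𝒜
  brk : L →ₗ[k] L →ₗ[k] L
  d : L →ₗ[k] L
  brk_deg : ∀ i j x y, x ∈ 𝒜 i → y ∈ 𝒜 j → brk x y ∈ 𝒜 (i + j)
  antisymm : ∀ i j x y, x ∈ 𝒜 i → y ∈ 𝒜 j →
    brk x y = (-((-1 : ℤ) ^ (i * j))) • brk y x
  jacobi : ∀ i j (x y z : L), x ∈ 𝒜 i → y ∈ 𝒜 j →
    brk x (brk y z) = brk (brk x y) z + ((-1 : ℤ) ^ (i * j)) • brk y (brk x z)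
  d_deg : ∀ i x, x ∈ 𝒜 (i + 1) → d x ∈ 𝒜 i
  d_top : ∀ x, x ∈ 𝒜 0 → d x = 0
  d_sq : ∀ x, d (d x) = 0
  leibniz : ∀ i (x y : L), x ∈ 𝒜 i →
    d (brk x y) = brk (d x) y + ((-1 : ℤ) ^ i) • brk x (d y)

/-- In a dg-Lie algebra concentrated in degrees `0` and `-1`,
the derived bracket `[x,y]_{-1} := [dx, y]` on the degree `-1` component is
antisymmetric and satisfies the Jacobi identity, making it an ordinary
(ungraded) Lie bracket. -/
theorem derived_bracket_is_lie {k L : Type*} [Field k] [CharZero k]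
    [AddCommGroup L] [Module k L] (g : GradedDGLA k L)
    (h2 : ∀ i, 2 ≤ i → g.𝒜 i = ⊥) :
    (∀ x y : L, x ∈ g.𝒜 1 → y ∈ g.𝒜 1 →
        g.brk (g.d x) y = - g.brk (g.d y) x) ∧
    (∀ x y z : L, x ∈ g.𝒜 1 → y ∈ g.𝒜 1 → z ∈ g.𝒜 1 →
        g.brk (g.d (g.brk (g.d x) y)) z
          + g.brk (g.d (g.brk (g.d y) z)) x
          + g.brk (g.d (g.brk (g.d z) x)) y = 0) := by
  -- the differential sends degree `-1` to degree `0`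
  have hd0 : ∀ x : L, x ∈ g.𝒜 1 → g.d x ∈ g.𝒜 0 := fun x hx => g.d_deg 0 x hx
  -- brackets of two degree `-1` elements vanish (they land in `𝒜 2 = ⊥`)
  have hbz : ∀ x y : L, x ∈ g.𝒜 1 → y ∈ g.𝒜 1 → g.brk x y = 0 := by
    intro x y hx hy
    have h := g.brk_deg 1 1 x y hx hy
    rw [h2 2 le_rfl] at h
    simpa using h
  -- `[dx, y] = [x, dy]`
  have hL1 : ∀ x y : L, x ∈ g.𝒜 1 → y ∈ g.𝒜 1 →
      g.brk (g.d x) y = g.brk x (g.d y) := by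
    intro x y hx hy
    have h := g.leibniz 1 x y hx
    rw [hbz x y hx hy, map_zero] at h
    have h' : g.brk (g.d x) y - g.brk x (g.d y) = 0 := by
      have : (0 : L) = g.brk (g.d x) y - g.brk x (g.d y) := by
        simpa [pow_one, neg_smul, sub_eq_add_neg] using h
      exact this.symm
    exact sub_eq_zero.mp h'
  -- `[x, w] = -[w, x]` for `x` of degree `-1` and `w` of degree `0`
  have hA10 : ∀ x w : L, x ∈ g.𝒜 1 → w ∈ g.𝒜 0 →
      g.brk x w = - g.brk w x := by
    intro x w hx hw
    have h := g.antisymm 1 0 x w hx hw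
    simpa [neg_smul] using h
  -- antisymmetry of the derived bracket
  have anti : ∀ x y : L, x ∈ g.𝒜 1 → y ∈ g.𝒜 1 →
      g.brk (g.d x) y = - g.brk (g.d y) x := by
    intro x y hx hy
    rw [hL1 x y hx hy, hA10 x (g.d y) hx (hd0 y hy)]
  refine ⟨anti, ?_⟩
  -- derived bracket stays in degree `-1`
  have hmem : ∀ x y : L, x ∈ g.𝒜 1 → y ∈ g.𝒜 1 → g.brk (g.d x) y ∈ g.𝒜 1 := by
    intro x y hx hy
    simpa using g.brk_deg 0 1 (g.d x) y (hd0 x hx) hy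
  -- `d [dx, y] = [dx, dy]`
  have hdbrk : ∀ x y : L, x ∈ g.𝒜 1 → y ∈ g.𝒜 1 →
      g.d (g.brk (g.d x) y) = g.brk (g.d x) (g.d y) := by
    intro x y hx hy
    have h := g.leibniz 0 (g.d x) y (hd0 x hx)
    simpa [g.d_sq x] using h
  -- key identity: `[dx, [dy, z]] = -[[dy, dz], x]`
  have key : ∀ x y z : L, x ∈ g.𝒜 1 → y ∈ g.𝒜 1 → z ∈ g.𝒜 1 →
      g.brk (g.d x) (g.brk (g.d y) z) = - g.brk (g.brk (g.d y) (g.d z)) x := by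
    intro x y z hx hy hz
    have hu : g.brk (g.d y) z ∈ g.𝒜 1 := hmem y z hy hz
    rw [hL1 x (g.brk (g.d y) z) hx hu, hdbrk y z hy hz]
    have hw : g.brk (g.d y) (g.d z) ∈ g.𝒜 0 := by
      simpa using g.brk_deg 0 0 (g.d y) (g.d z) (hd0 y hy) (hd0 z hz)
    exact hA10 x _ hx hw
  intro x y z hx hy hz
  -- abbreviate
  set A := g.d x with hA
  set B := g.d y with hB
  set C := g.d z with hC
  -- rewrite each `d`-term
  rw [hdbrk x y hx hy, hdbrk y z hy hz, hdbrk z x hz hx]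
  -- graded Jacobi in degree 0
  have jac := g.jacobi 0 0 A B z (hd0 x hx) (hd0 y hy)
  simp only [Nat.mul_zero, pow_zero, one_smul] at jac
  -- `[A, [B, z]] = -[[B,C], x]`
  have k1 := key x y z hx hy hz
  -- `[B, [A, z]] = -[[A,C], y]`
  have k2 := key y x z hy hx hz
  -- antisymmetry in degree 0: `[A, C] = -[C, A]`
  have hAC : g.brk A C = - g.brk C A := by
    have h := g.antisymm 0 0 A C (hd0 x hx) (hd0 z hz)
    simpa [neg_smul] using h
  -- from jac: [[A,B], z] = [A,[B,z]] - [B,[A,z]] = -[[B,C],x] + [[C,A],y]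
  have main : g.brk (g.brk A B) z
      = - g.brk (g.brk B C) x - g.brk (g.brk C A) y := by
    have h : g.brk (g.brk A B) z = g.brk A (g.brk B z) - g.brk B (g.brk A z) := by
      rw [jac]; abel
    rw [h, k1, k2, hAC]
    simp only [map_neg, LinearMap.neg_apply]
    abel
  rw [main]
  abel
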